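/- Fix z ≥ 0 and a positive integer u. Let p_1 < p_2 < … < p_u ≤ N be primes with p_{i+1} > p_i^{e^z} for all 1 ≤ i ≤ u − 1, where N ≥ 2 and n ≥ 3 are such that N ≤ n. Then (1/n) · #{ 1 ≤ m ≤ n : δ_{p_1,z}(m) = δ_{p_2,z}(m) = … = δ_{p_u,z}(m) = 1 } = ( ∏_{i=1}^{u} (1/p_i) · ∏_{q prime, p_i < q ≤ p_i^{e^z}} (1 − 1/q) ) · ( 1 + O( e^{ −(log n)/(4 e^z log N) } ) ) + O( n^{−1/2} ), with implied constants depending at most on u and z. -/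

import Mathlib

/-!
Put `K = ∏ pᵢ` and let `Q` be the union of the prime sets `(pᵢ, pᵢ^{e^z}]`. The gap condition makes
these sets pairwise disjoint and free of the `pⱼ`, so the `m` counted are exactly the multiples of
`K` divisible by no prime of `Q`. Inclusion–exclusion over `S ⊆ Q` writes their number as
`∑_S (-1)^|S| ⌊n / (K ∏ S)⌋`, whose main terms add up to `(n / K) ∏_{q ∈ Q} (1 - 1/q)`.
Rankin's trick bounds each rounding error `|⌊x⌋ - x|` by `x^{1-ε}`, so the total error is at most
`n^{1-ε} K^{ε-1} ∏_{q ∈ Q} (1 + q^{ε-1})`. For `ε = 1 / (2 e^z log N)` every `q ∈ Q` has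
`q^ε ≤ 2`, and the weak Mertens bound `∑_{p < q ≤ p^{e^z}} 1/q ≤ e^z + 2` makes both this product
and `1 / ∏_{q ∈ Q} (1 - 1/q)` at most `exp (O (u e^z))`; `K^ε ≤ e^u` and `n^{-ε}` is the claimed
saving. In particular the second error term can be taken to be `0`.
-/
open MeasureTheory ProbabilityTheory Filter Finset
open scoped Classical ENNReal

/-- The set of primes `q` with `p < q ≤ p ^ (e ^ z)`. -/
noncomputable def primesBetween (z : ℝ) (p : ℕ) : Finset ℕ :=
  (Finset.range (⌊(p : ℝ) ^ Real.exp z⌋₊ + 1)).filter (fun q => q.Prime ∧ p < q)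

/-- `δ_{p,z}(m) = 1` if `p ∣ m` and no prime `q` with `p < q ≤ p^{e^z}` divides `m`, else `0`. -/
noncomputable def deltaPZ (z : ℝ) (p m : ℕ) : ℕ :=
  if p ∣ m ∧ ∀ q : ℕ, q.Prime → p < q → (q : ℝ) ≤ (p : ℝ) ^ Real.exp z → ¬ q ∣ m then 1 else 0

open Real Function
open scoped ArithmeticFunction.vonMangoldt

lemma sum_vonMangoldt_mul_div_le (y : ℕ) :
    ∑ n ∈ Ioc 0 y, Λ n * (y / n : ℕ) ≤ y * log y := by
  rw [← ArithmeticFunction.sum_Ioc_mul_zeta_eq_sum, ArithmeticFunction.vonMangoldt_mul_zeta]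
  calc ∑ n ∈ Ioc 0 y, ArithmeticFunction.log n ≤ ∑ _n ∈ Ioc 0 y, log y := by
        refine sum_le_sum fun n hn => ?_
        obtain ⟨hn0, hny⟩ := mem_Ioc.1 hn
        rw [ArithmeticFunction.log_apply]
        exact log_le_log (by exact_mod_cast hn0) (by exact_mod_cast hny)
    _ = y * log y := by simp

/-- `∑_{q ≤ y} log q ⌊y/q⌋ ≤ log y! ≤ y log y`, and replacing `⌊y/q⌋` by `y/q` costs at most
`θ(y) ≤ y log 4`. -/
lemma sum_primesLE_log_div_le {y : ℕ} (hy : 0 < y) :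
    ∑ q ∈ Nat.primesLE y, log q / q ≤ log y + log 4 := by
  have hfloor : ∑ q ∈ Nat.primesLE y, log q * (y / q : ℕ) ≤ y * log y := by
    calc ∑ q ∈ Nat.primesLE y, log q * (y / q : ℕ)
        = ∑ q ∈ Nat.primesLE y, Λ q * (y / q : ℕ) := sum_congr rfl fun q hq => by
          rw [ArithmeticFunction.vonMangoldt_apply_prime (Nat.prime_of_mem_primesLE hq)]
      _ ≤ ∑ n ∈ Ioc 0 y, Λ n * (y / n : ℕ) := by
          refine sum_le_sum_of_subset_of_nonneg (fun q hq => ?_) (fun n _ _ => by positivity)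
          exact mem_Ioc.2 ⟨(Nat.prime_of_mem_primesLE hq).pos, Nat.le_of_mem_primesLE hq⟩
      _ ≤ y * log y := sum_vonMangoldt_mul_div_le y
  have htheta : ∑ q ∈ Nat.primesLE y, log q ≤ log 4 * y := by
    rw [← Chebyshev.theta_eq_sum_primesLE_log]
    exact Chebyshev.theta_le_log4_mul_x (Nat.cast_nonneg y)
  have hterm : ∀ q ∈ Nat.primesLE y, y * (log q / q) ≤ log q * (y / q : ℕ) + log q := by
    intro q hq
    have hq : (1 : ℝ) < q := by exact_mod_cast (Nat.prime_of_mem_primesLE hq).one_lt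
    have hfl : (y : ℝ) / q - 1 ≤ (y / q : ℕ) := by
      have h := Nat.sub_one_lt_floor ((y : ℝ) / q)
      rw [Nat.floor_div_natCast, Nat.floor_natCast] at h
      exact h.le
    have := log_pos hq
    calc (y : ℝ) * (log q / q) = log q * ((y : ℝ) / q - 1) + log q := by field_simp; ring
      _ ≤ _ := by gcongr
  have hyR : (0 : ℝ) < y := by exact_mod_cast hy
  rw [← mul_le_mul_iff_right₀ hyR, mul_sum]
  calc ∑ q ∈ Nat.primesLE y, y * (log q / q)
      ≤ ∑ q ∈ Nat.primesLE y, (log q * (y / q : ℕ) + log q) := sum_le_sum hterm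
    _ ≤ y * (log y + log 4) := by rw [sum_add_distrib]; linarith

lemma mem_primesBetween {z : ℝ} {p q : ℕ} :
    q ∈ primesBetween z p ↔ q.Prime ∧ p < q ∧ (q : ℝ) ≤ (p : ℝ) ^ exp z := by
  rw [primesBetween, mem_filter, mem_range, Nat.lt_succ_iff, Nat.le_floor_iff (by positivity)]
  tauto

lemma deltaPZ_eq_one_iff {z : ℝ} {p m : ℕ} :
    deltaPZ z p m = 1 ↔ p ∣ m ∧ ∀ q ∈ primesBetween z p, ¬ q ∣ m := by
  simp only [deltaPZ, mem_primesBetween, and_imp]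
  split_ifs with h <;> simp only [true_iff, false_iff] <;> tauto

lemma sum_primesBetween_inv_le {z : ℝ} (hz : 0 ≤ z) {p : ℕ} (hp : p.Prime) :
    ∑ q ∈ primesBetween z p, 1 / (q : ℝ) ≤ exp z + 2 := by
  set y := ⌊(p : ℝ) ^ exp z⌋₊
  have hp1 : (1 : ℝ) < p := by exact_mod_cast hp.one_lt
  have hlogp : 0 < log p := log_pos hp1
  have hpy : (p : ℝ) ≤ (p : ℝ) ^ exp z := Real.self_le_rpow_of_one_le hp1.le (one_le_exp hz)
  have hy : 0 < y := hp.pos.trans_le (Nat.le_floor hpy)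
  have hlogy : log y ≤ exp z * log p := by
    rw [← log_rpow (by positivity)]
    exact log_le_log (by exact_mod_cast hy) (Nat.floor_le (by positivity))
  have hlog4 : log 4 ≤ 2 * log p := by
    have := log_le_log two_pos (show (2 : ℝ) ≤ p by exact_mod_cast hp.two_le)
    rw [show (4 : ℝ) = 2 ^ 2 by norm_num, log_pow]
    push_cast
    linarith
  calc ∑ q ∈ primesBetween z p, 1 / (q : ℝ)
      ≤ ∑ q ∈ primesBetween z p, log q / q / log p := by
        refine sum_le_sum fun q hq => ?_
        obtain ⟨-, hpq, -⟩ := mem_primesBetween.1 hq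
        rw [le_div_iff₀ hlogp, one_div_mul_eq_div]
        gcongr
    _ ≤ ∑ q ∈ Nat.primesLE y, log q / q / log p := by
        refine sum_le_sum_of_subset_of_nonneg (fun q hq => ?_) (fun q _ _ => by positivity)
        obtain ⟨hq, -, hqy⟩ := mem_primesBetween.1 hq
        exact Nat.mem_primesLE.2 ⟨Nat.le_floor hqy, hq⟩
    _ = (∑ q ∈ Nat.primesLE y, log q / q) / log p := by rw [sum_div]
    _ ≤ (log y + log 4) / log p := by gcongr; exact sum_primesLE_log_div_le hy
    _ ≤ exp z + 2 := by rw [div_le_iff₀ hlogp]; linarith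

lemma card_filter_dvd_insert (n : ℕ) {K a : ℕ} (s : Finset ℕ) (ha : a.Prime) (haK : ¬ a ∣ K) :
    #{m ∈ Ioc 0 n | K ∣ m ∧ ∀ q ∈ insert a s, ¬ q ∣ m}
      + #{m ∈ Ioc 0 n | K * a ∣ m ∧ ∀ q ∈ s, ¬ q ∣ m}
      = #{m ∈ Ioc 0 n | K ∣ m ∧ ∀ q ∈ s, ¬ q ∣ m} := by
  have hKa : Nat.Coprime K a := Nat.coprime_comm.1 ((Nat.Prime.coprime_iff_not_dvd ha).2 haK)
  rw [← card_filter_add_card_filter_not (s := {m ∈ Ioc 0 n | K ∣ m ∧ ∀ q ∈ s, ¬ q ∣ m})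
    (fun m => ¬ a ∣ m), filter_filter, filter_filter]
  simp only [not_not]
  congr 2 <;> refine filter_congr fun m _ => ?_
  · rw [forall_mem_insert]; tauto
  · exact ⟨fun ⟨hKam, hs⟩ => ⟨⟨(dvd_mul_right K a).trans hKam, hs⟩, (dvd_mul_left a K).trans hKam⟩,
      fun ⟨⟨hKm, hs⟩, ham⟩ => ⟨hKa.mul_dvd_of_dvd_of_dvd hKm ham, hs⟩⟩

lemma card_filter_dvd_and_forall_not_dvd (n : ℕ) {Q : Finset ℕ} (hQ : ∀ q ∈ Q, q.Prime) {K : ℕ}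
    (hQK : ∀ q ∈ Q, ¬ q ∣ K) :
    (#{m ∈ Ioc 0 n | K ∣ m ∧ ∀ q ∈ Q, ¬ q ∣ m} : ℝ)
      = ∑ S ∈ Q.powerset, (-1) ^ #S * ((n / (K * ∏ q ∈ S, q) : ℕ) : ℝ) := by
  induction Q using Finset.induction_on generalizing K with
  | empty => simp [Nat.Ioc_filter_dvd_card_eq_div]
  | @insert a s ha ih =>
    rw [forall_mem_insert] at hQ hQK
    have hQKa : ∀ q ∈ s, ¬ q ∣ K * a := fun q hq hdvd =>
      ((hQ.2 q hq).dvd_mul.1 hdvd).elim (hQK.2 q hq) fun hqa =>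
        ha (((Nat.prime_dvd_prime_iff_eq (hQ.2 q hq) hQ.1).1 hqa) ▸ hq)
    have hcard : (#{m ∈ Ioc 0 n | K ∣ m ∧ ∀ q ∈ insert a s, ¬ q ∣ m} : ℝ)
        = #{m ∈ Ioc 0 n | K ∣ m ∧ ∀ q ∈ s, ¬ q ∣ m}
          - #{m ∈ Ioc 0 n | K * a ∣ m ∧ ∀ q ∈ s, ¬ q ∣ m} := by
      rw [← card_filter_dvd_insert n s hQ.1 hQK.1, Nat.cast_add, add_sub_cancel_right]
    rw [hcard, ih hQ.2 hQK.2, ih hQ.2 hQKa, sum_powerset_insert ha, sub_eq_add_neg,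
      ← sum_neg_distrib]
    congr 1
    refine sum_congr rfl fun S hS => ?_
    have haS : a ∉ S := fun h => ha (mem_powerset.1 hS h)
    rw [card_insert_of_notMem haS, prod_insert haS, pow_succ, mul_assoc K]
    ring

lemma abs_natFloor_sub_le_rpow {x s : ℝ} (hx : 0 < x) (hs0 : 0 ≤ s) (hs1 : s ≤ 1) :
    |(⌊x⌋₊ : ℝ) - x| ≤ x ^ s := by
  have hfloor := Nat.floor_le hx.le
  have hlt := Nat.sub_one_lt_floor x
  rw [abs_sub_comm, abs_of_nonneg (by linarith)]
  rcases le_or_gt 1 x with h | h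
  · calc x - ⌊x⌋₊ ≤ 1 := by linarith
      _ ≤ x ^ s := one_le_rpow h hs0
  · calc x - ⌊x⌋₊ ≤ x := by linarith [Nat.cast_nonneg (α := ℝ) ⌊x⌋₊]
      _ ≤ x ^ s := by simpa using rpow_le_rpow_of_exponent_ge hx h.le hs1

lemma div_rpow_one_sub_div {x y : ℝ} (hx : 0 < x) (hy : 0 < y) (ε : ℝ) :
    (x / y) ^ (1 - ε) / x = x ^ (-ε) * y ^ (ε - 1) := by
  rw [div_rpow hx.le hy.le, rpow_sub hx, rpow_one, rpow_neg hx.le, ← neg_sub, rpow_neg hy.le]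
  field_simp

/-- Rankin's trick: the rounding error of the term `d = K ∏ S` is at most `(n/d)^(1-ε)`. -/
lemma abs_card_div_sub_prod_le {n K : ℕ} (hn : 0 < n) (hK : 0 < K) {Q : Finset ℕ}
    (hQ : ∀ q ∈ Q, q.Prime) (hQK : ∀ q ∈ Q, ¬ q ∣ K) {ε : ℝ} (hε0 : 0 ≤ ε) (hε1 : ε ≤ 1) :
    |(#{m ∈ Ioc 0 n | K ∣ m ∧ ∀ q ∈ Q, ¬ q ∣ m} : ℝ) / n - (∏ q ∈ Q, (1 - 1 / (q : ℝ))) / K|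
      ≤ (n : ℝ) ^ (-ε) * (K : ℝ) ^ (ε - 1) * ∏ q ∈ Q, (1 + (q : ℝ) ^ (ε - 1)) := by
  have hnR : (0 : ℝ) < n := by exact_mod_cast hn
  have hKR : (0 : ℝ) < K := by exact_mod_cast hK
  have hprod : ∀ S ∈ Q.powerset, (0 : ℝ) < ∏ q ∈ S, (q : ℝ) := fun S hS =>
    prod_pos fun q hq => by exact_mod_cast (hQ q (mem_powerset.1 hS hq)).pos
  have hmain : (∏ q ∈ Q, (1 - 1 / (q : ℝ))) / K
      = ∑ S ∈ Q.powerset, (-1) ^ #S * ((n / (K * ∏ q ∈ S, (q : ℝ))) / n) := by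
    simp_rw [sub_eq_add_neg, prod_one_add, sum_div, prod_neg, prod_div_distrib, prod_const_one]
    refine sum_congr rfl fun S hS => ?_
    field_simp
  have herr : ∀ S ∈ Q.powerset,
      |((n / (K * ∏ q ∈ S, q) : ℕ) : ℝ) / n - (n / (K * ∏ q ∈ S, (q : ℝ))) / n|
        ≤ (n : ℝ) ^ (-ε) * ((K : ℝ) ^ (ε - 1) * ∏ q ∈ S, (q : ℝ) ^ (ε - 1)) := by
    intro S hS
    have hd : (0 : ℝ) < K * ∏ q ∈ S, (q : ℝ) := mul_pos hKR (hprod S hS)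
    have hfloor : ((n / (K * ∏ q ∈ S, q) : ℕ) : ℝ) = ⌊(n : ℝ) / (K * ∏ q ∈ S, (q : ℝ))⌋₊ := by
      rw [← Nat.cast_prod, ← Nat.cast_mul, Nat.floor_div_natCast, Nat.floor_natCast]
    rw [← sub_div, abs_div, abs_of_pos hnR, hfloor]
    calc _ ≤ ((n : ℝ) / (K * ∏ q ∈ S, (q : ℝ))) ^ (1 - ε) / n := by
          gcongr
          exact abs_natFloor_sub_le_rpow (div_pos hnR hd) (by linarith) (by linarith)
      _ = _ := by
          rw [div_rpow_one_sub_div hnR hd, mul_rpow hKR.le (hprod S hS).le,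
            finsetProd_rpow _ _ fun q _ => Nat.cast_nonneg q]
  rw [card_filter_dvd_and_forall_not_dvd n hQ hQK, hmain, sum_div, ← sum_sub_distrib]
  calc _ ≤ ∑ S ∈ Q.powerset, |(-1) ^ #S * ((n / (K * ∏ q ∈ S, q) : ℕ) : ℝ) / n
            - (-1) ^ #S * ((n / (K * ∏ q ∈ S, (q : ℝ))) / n)| := abs_sum_le_sum_abs _ _
    _ ≤ ∑ S ∈ Q.powerset, (n : ℝ) ^ (-ε) * ((K : ℝ) ^ (ε - 1) * ∏ q ∈ S, (q : ℝ) ^ (ε - 1)) := by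
        refine sum_le_sum fun S hS => ?_
        rw [mul_div_assoc, ← mul_sub, abs_mul, abs_pow, abs_neg, abs_one, one_pow, one_mul]
        exact herr S hS
    _ = _ := by rw [← mul_sum, ← mul_sum, prod_one_add, mul_assoc]

lemma exp_neg_two_mul_le_one_sub {x : ℝ} (hx0 : 0 ≤ x) (hx : x ≤ 1 / 2) :
    exp (-(2 * x)) ≤ 1 - x := by
  have hlog := one_sub_inv_le_log_of_pos (x := 1 - x) (by linarith)
  have hinv : (1 - x)⁻¹ ≤ 1 + 2 * x := by
    rw [inv_le_iff_one_le_mul₀ (by linarith)]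
    nlinarith
  calc exp (-(2 * x)) ≤ exp (log (1 - x)) := exp_le_exp.2 (by linarith)
    _ = 1 - x := exp_log (by linarith)

lemma exp_neg_le_prod_one_sub_inv {Q : Finset ℕ} (hQ : ∀ q ∈ Q, 2 ≤ q) :
    exp (-(2 * ∑ q ∈ Q, 1 / (q : ℝ))) ≤ ∏ q ∈ Q, (1 - 1 / (q : ℝ)) := by
  rw [mul_sum, ← sum_neg_distrib, exp_sum]
  refine prod_le_prod (fun _ _ => (exp_pos _).le) fun q hq => ?_
  have hq2 : (2 : ℝ) ≤ q := by exact_mod_cast hQ q hq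
  exact exp_neg_two_mul_le_one_sub (by positivity) (by
    rw [div_le_div_iff₀ (by linarith) two_pos]; linarith)

lemma prod_one_add_rpow_sub_one_le_exp {Q : Finset ℕ} (hQ : ∀ q ∈ Q, 0 < q) {ε : ℝ}
    (hQε : ∀ q ∈ Q, (q : ℝ) ^ ε ≤ 2) :
    ∏ q ∈ Q, (1 + (q : ℝ) ^ (ε - 1)) ≤ exp (2 * ∑ q ∈ Q, 1 / (q : ℝ)) := by
  rw [mul_sum]
  refine (prod_le_prod (fun q _ => by positivity) fun q hq => ?_).trans
    (prod_one_add_le_exp_sum Q fun q => by positivity)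
  have hq0 : (0 : ℝ) < q := by exact_mod_cast hQ q hq
  rw [rpow_sub_one hq0.ne', mul_one_div]
  gcongr
  exact hQε q hq

theorem exists_card_div_eq_mul_one_add {n K : ℕ} (hn : 0 < n) (hK : 0 < K) {Q : Finset ℕ}
    (hQ : ∀ q ∈ Q, q.Prime) (hQK : ∀ q ∈ Q, ¬ q ∣ K) {ε : ℝ} (hε0 : 0 ≤ ε) (hε1 : ε ≤ 1)
    (hQε : ∀ q ∈ Q, (q : ℝ) ^ ε ≤ 2) :
    ∃ E : ℝ, |E| ≤ (n : ℝ) ^ (-ε) * (K : ℝ) ^ ε * exp (4 * ∑ q ∈ Q, 1 / (q : ℝ)) ∧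
      (#{m ∈ Ioc 0 n | K ∣ m ∧ ∀ q ∈ Q, ¬ q ∣ m} : ℝ) / n
        = (∏ q ∈ Q, (1 - 1 / (q : ℝ))) / K * (1 + E) := by
  set D : ℝ := #{m ∈ Ioc 0 n | K ∣ m ∧ ∀ q ∈ Q, ¬ q ∣ m} / n
  set M : ℝ := (∏ q ∈ Q, (1 - 1 / (q : ℝ))) / K
  set σ := ∑ q ∈ Q, 1 / (q : ℝ)
  have hKR : (0 : ℝ) < K := by exact_mod_cast hK
  have hlower := exp_neg_le_prod_one_sub_inv fun q hq => (hQ q hq).two_le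
  have hM : 0 < M := div_pos ((exp_pos _).trans_le hlower) hKR
  have hinvK : 1 / (K : ℝ) ≤ M * exp (2 * σ) := by
    rw [div_mul_eq_mul_div]
    gcongr
    calc (1 : ℝ) = exp (-(2 * σ)) * exp (2 * σ) := by rw [← exp_add, neg_add_cancel, exp_zero]
      _ ≤ _ := by gcongr
  refine ⟨(D - M) / M, ?_, by field_simp; ring⟩
  rw [abs_div, abs_of_pos hM, div_le_iff₀ hM]
  calc |D - M| ≤ (n : ℝ) ^ (-ε) * (K : ℝ) ^ (ε - 1) * ∏ q ∈ Q, (1 + (q : ℝ) ^ (ε - 1)) :=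
        abs_card_div_sub_prod_le hn hK hQ hQK hε0 hε1
    _ ≤ (n : ℝ) ^ (-ε) * (K : ℝ) ^ (ε - 1) * exp (2 * σ) := by
        gcongr
        exact prod_one_add_rpow_sub_one_le_exp (fun q hq => (hQ q hq).pos) hQε
    _ = (n : ℝ) ^ (-ε) * (K : ℝ) ^ ε * exp (2 * σ) * (1 / K) := by
        rw [rpow_sub_one hKR.ne']; ring
    _ ≤ (n : ℝ) ^ (-ε) * (K : ℝ) ^ ε * exp (2 * σ) * (M * exp (2 * σ)) := by gcongr
    _ = (n : ℝ) ^ (-ε) * (K : ℝ) ^ ε * exp (4 * σ) * M := by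
        rw [show 4 * σ = 2 * σ + 2 * σ by ring, exp_add]; ring

section Family

variable {ι : Type*} [Fintype ι] {z : ℝ} {p : ι → ℕ}

noncomputable def sievePrimes (z : ℝ) (p : ι → ℕ) : Finset ℕ :=
  univ.biUnion fun i => primesBetween z (p i)

lemma mem_sievePrimes {q : ℕ} : q ∈ sievePrimes z p ↔ ∃ i, q ∈ primesBetween z (p i) := by
  simp [sievePrimes]

lemma prime_of_mem_sievePrimes {q : ℕ} (hq : q ∈ sievePrimes z p) : q.Prime := by
  obtain ⟨i, hqi⟩ := mem_sievePrimes.1 hq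
  exact (mem_primesBetween.1 hqi).1

lemma le_of_mem_sievePrimes {N : ℝ} (hpN : ∀ i, (p i : ℝ) ≤ N) {q : ℕ} (hq : q ∈ sievePrimes z p) :
    (q : ℝ) ≤ N ^ exp z := by
  obtain ⟨i, hqi⟩ := mem_sievePrimes.1 hq
  exact (mem_primesBetween.1 hqi).2.2.trans (by gcongr; exact hpN i)

lemma forall_deltaPZ_eq_one_iff (hp : ∀ i, (p i).Prime) (hinj : Injective p) {m : ℕ} :
    (∀ i, deltaPZ z (p i) m = 1) ↔ (∏ i, p i) ∣ m ∧ ∀ q ∈ sievePrimes z p, ¬ q ∣ m := by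
  have hprod : (∏ i, p i) ∣ m ↔ ∀ i, p i ∣ m := by
    refine ⟨fun h i => (dvd_prod_of_mem p (mem_univ i)).trans h, fun h => ?_⟩
    rw [← prod_image (f := fun q => q) fun i _ j _ hij => hinj hij]
    exact prod_primes_dvd m (by simpa using fun i => (hp i).prime) (by simpa using h)
  simp only [deltaPZ_eq_one_iff, forall_and, hprod, mem_sievePrimes]
  grind

variable (hdisj : Pairwise (Disjoint on fun i => primesBetween z (p i)))
include hdisj

lemma prod_inv_mul_prod_primesBetween :
    ∏ i, (1 / (p i : ℝ)) * ∏ q ∈ primesBetween z (p i), (1 - 1 / (q : ℝ))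
      = (∏ q ∈ sievePrimes z p, (1 - 1 / (q : ℝ))) / ((∏ i, p i : ℕ) : ℝ) := by
  rw [prod_mul_distrib, sievePrimes, prod_biUnion (hdisj.set_pairwise _), Nat.cast_prod,
    prod_div_distrib, prod_const_one, one_div_mul_eq_div]

lemma sum_sievePrimes_inv_le (hz : 0 ≤ z) (hp : ∀ i, (p i).Prime) :
    ∑ q ∈ sievePrimes z p, 1 / (q : ℝ) ≤ Fintype.card ι * (exp z + 2) := by
  rw [sievePrimes, sum_biUnion (hdisj.set_pairwise _), ← nsmul_eq_mul, ← card_univ]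
  exact sum_le_card_nsmul _ _ _ fun i _ => sum_primesBetween_inv_le hz (hp i)

end Family

lemma rpow_exp_lt_of_lt {z : ℝ} {u : ℕ} {p : Fin u → ℕ} (hmono : StrictMono p)
    (hgap : ∀ i : ℕ, ∀ hi : i + 1 < u,
      ((p ⟨i, Nat.lt_of_succ_lt hi⟩ : ℕ) : ℝ) ^ exp z < ((p ⟨i + 1, hi⟩ : ℕ) : ℝ))
    {i j : Fin u} (hij : i < j) : (p i : ℝ) ^ exp z < p j := by
  have hi : i.val + 1 < u := by omega
  calc (p i : ℝ) ^ exp z < p ⟨i + 1, hi⟩ := hgap i hi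
    _ ≤ p j := by exact_mod_cast hmono.monotone (Fin.mk_le_of_le_val (by omega))

section Chain

variable {ι : Type*} [LinearOrder ι] {z : ℝ} {p : ι → ℕ}
  (hgap : ∀ ⦃i j : ι⦄, i < j → (p i : ℝ) ^ exp z < p j)
include hgap

lemma lt_of_mem_primesBetween {i j : ι} (hij : i < j) {q : ℕ} (hq : q ∈ primesBetween z (p i)) :
    q < p j := by
  exact_mod_cast (mem_primesBetween.1 hq).2.2.trans_lt (hgap hij)

lemma pairwise_disjoint_primesBetween : Pairwise (Disjoint on fun i => primesBetween z (p i)) :=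
  (pairwise_disjoint_on _).2 fun _ _ hij => disjoint_left.2 fun _ hqi hqj =>
    (lt_of_mem_primesBetween hgap hij hqi).not_gt (mem_primesBetween.1 hqj).2.1

lemma not_dvd_prod_of_mem_sievePrimes [Fintype ι] (hp : ∀ i, (p i).Prime) (hmono : Monotone p)
    {q : ℕ} (hq : q ∈ sievePrimes z p) : ¬ q ∣ ∏ j, p j := by
  obtain ⟨i, hqi⟩ := mem_sievePrimes.1 hq
  have hqp := (mem_primesBetween.1 hqi).1
  intro hdvd
  obtain ⟨j, -, hj⟩ := (Prime.dvd_finsetProd_iff hqp.prime _).1 hdvd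
  rw [(Nat.prime_dvd_prime_iff_eq hqp (hp j)).1 hj] at hqi
  rcases lt_or_ge i j with hij | hji
  · exact (lt_of_mem_primesBetween hgap hij hqi).false
  · exact (hmono hji).not_gt (mem_primesBetween.1 hqi).2.1

end Chain

lemma rpow_le_exp_mul_of_log_le {x a ε : ℝ} (hx : 0 < x) (hε : 0 ≤ ε) (h : log x ≤ a) :
    x ^ ε ≤ exp (a * ε) := by
  rw [rpow_def_of_pos hx]
  exact exp_le_exp.2 (mul_le_mul_of_nonneg_right h hε)

section RankinExponent

/-- The exponent `ε` in Rankin's trick, chosen so that `q ^ ε ≤ e^{1/2}` for all `q ≤ N ^ e^z`. -/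
noncomputable def rankinExponent (z N : ℝ) : ℝ := 1 / (2 * exp z * log N)

variable {z N : ℝ}

lemma rankinExponent_nonneg (hN : 1 ≤ N) : 0 ≤ rankinExponent z N := by
  have := log_nonneg hN
  unfold rankinExponent; positivity

lemma rankinExponent_le_one (hz : 0 ≤ z) (hN : 2 ≤ N) : rankinExponent z N ≤ 1 := by
  have h2 := log_two_gt_d9
  have hlog := log_le_log two_pos hN
  have hez := one_le_exp hz
  rw [rankinExponent, div_le_one (by nlinarith)]
  nlinarith

lemma rpow_rankinExponent_le_two (hN : 1 < N) {q : ℝ} (hq : 0 < q) (hqN : q ≤ N ^ exp z) :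
    q ^ rankinExponent z N ≤ 2 := by
  have hlog : log q ≤ exp z * log N := by
    rw [← log_rpow (by linarith)]; exact log_le_log hq hqN
  refine (rpow_le_exp_mul_of_log_le hq (rankinExponent_nonneg hN.le) hlog).trans ?_
  have := log_pos hN
  rw [rankinExponent, mul_one_div, show exp z * log N / (2 * exp z * log N) = 1 / 2 by field_simp]
  calc exp (1 / 2) ≤ exp (log 2) := exp_le_exp.2 (by linarith [log_two_gt_d9])
    _ = 2 := exp_log two_pos

lemma rpow_rankinExponent_le_exp (hz : 0 ≤ z) (hN : 1 < N) {K : ℝ} (hK : 0 < K) {u : ℕ}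
    (hKN : K ≤ N ^ u) : K ^ rankinExponent z N ≤ exp u := by
  have hlogN := log_pos hN
  have hlog : log K ≤ u * (exp z * log N) := by
    calc log K ≤ log (N ^ u) := log_le_log hK hKN
      _ = u * (1 * log N) := by rw [log_pow, one_mul]
      _ ≤ u * (exp z * log N) := by gcongr; exact one_le_exp hz
  refine (rpow_le_exp_mul_of_log_le hK (rankinExponent_nonneg hN.le) hlog).trans ?_
  rw [rankinExponent, mul_one_div, exp_le_exp, div_le_iff₀ (by positivity)]
  have : 0 ≤ u * (exp z * log N) := by positivity
  linarith

lemma rpow_neg_rankinExponent_le (hN : 1 < N) {n : ℝ} (hn : 1 ≤ n) :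
    n ^ (-rankinExponent z N) ≤ exp (-log n / (4 * exp z * log N)) := by
  have := log_pos hN
  have := log_nonneg hn
  rw [rpow_def_of_pos (by linarith), rankinExponent, exp_le_exp, neg_div, mul_neg,
    neg_le_neg_iff, mul_one_div]
  gcongr
  norm_num

end RankinExponent

theorem sieve_density_general (z : ℝ) (hz : 0 ≤ z) (u : ℕ) :
    ∃ C : ℝ, 0 < C ∧ ∀ (N : ℝ) (n : ℕ), 2 ≤ N → 3 ≤ n → N ≤ n →
      ∀ p : Fin u → ℕ, (∀ i, (p i).Prime) → StrictMono p → (∀ i, (p i : ℝ) ≤ N) →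
        (∀ i : ℕ, ∀ hi : i + 1 < u,
          ((p ⟨i, Nat.lt_of_succ_lt hi⟩ : ℕ) : ℝ) ^ Real.exp z < ((p ⟨i + 1, hi⟩ : ℕ) : ℝ)) →
        ∃ E₁ E₂ : ℝ,
          |E₁| ≤ C * Real.exp (-Real.log n / (4 * Real.exp z * Real.log N)) ∧
          |E₂| ≤ C * (n : ℝ) ^ (-(1 : ℝ) / 2) ∧
          (1 / (n : ℝ)) * (((Finset.Icc 1 n).filter fun m => ∀ i, deltaPZ z (p i) m = 1).card : ℝ)
            = (∏ i, (1 / (p i : ℝ)) * ∏ q ∈ primesBetween z (p i), (1 - 1 / (q : ℝ)))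
                * (1 + E₁) + E₂ := by
  refine ⟨exp (4 * (u * (exp z + 2))) * exp u, by positivity, ?_⟩
  intro N n hN hn _ p hp hmono hpN hgap
  have hgap' : ∀ ⦃i j⦄, i < j → (p i : ℝ) ^ exp z < p j := fun _ _ => rpow_exp_lt_of_lt hmono hgap
  have hdisj := pairwise_disjoint_primesBetween hgap'
  have hN1 : (1 : ℝ) < N := by linarith
  have hK : 0 < ∏ i, p i := prod_pos fun i _ => (hp i).pos
  have hKN : ((∏ i, p i : ℕ) : ℝ) ≤ N ^ u := by
    simpa using prod_le_prod (s := univ) (fun i _ => Nat.cast_nonneg (p i)) fun i _ => hpN i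
  obtain ⟨E, hE, hD⟩ := exists_card_div_eq_mul_one_add (n := n) (by omega) hK
    (fun _ => prime_of_mem_sievePrimes)
    (fun _ => not_dvd_prod_of_mem_sievePrimes hgap' hp hmono.monotone)
    (rankinExponent_nonneg hN1.le) (rankinExponent_le_one hz hN) fun q hq =>
      rpow_rankinExponent_le_two hN1 (by exact_mod_cast (prime_of_mem_sievePrimes hq).pos)
        (le_of_mem_sievePrimes hpN hq)
  refine ⟨E, 0, hE.trans ?_, by simp; positivity, ?_⟩
  · calc _ ≤ exp (-log n / (4 * exp z * log N)) * exp u * exp (4 * (u * (exp z + 2))) := by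
          gcongr ?_ * ?_ * exp (4 * ?_)
          · exact rpow_neg_rankinExponent_le hN1 (by exact_mod_cast (by omega : 1 ≤ n))
          · exact rpow_rankinExponent_le_exp hz hN1 (by exact_mod_cast hK) hKN
          · simpa using sum_sievePrimes_inv_le hdisj hz hp
      _ = _ := by ring
  · rw [prod_inv_mul_prod_primesBetween hdisj, ← hD, add_zero, one_div_mul_eq_div,
      show Icc 1 n = Ioc 0 n from Icc_add_one_left_eq_Ioc 0 n]
    congr 3
    exact filter_congr fun m _ => forall_deltaPZ_eq_one_iff hp hmono.injective

theorem sieve_density (z : ℝ) (hz : 0 ≤ z) (u : ℕ) (hu : 0 < u) :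
    ∃ C : ℝ, 0 < C ∧ ∀ (N : ℝ) (n : ℕ), 2 ≤ N → 3 ≤ n → N ≤ n →
      ∀ p : Fin u → ℕ, (∀ i, (p i).Prime) → StrictMono p → (∀ i, (p i : ℝ) ≤ N) →
        (∀ i : ℕ, ∀ hi : i + 1 < u,
          ((p ⟨i, Nat.lt_of_succ_lt hi⟩ : ℕ) : ℝ) ^ Real.exp z < ((p ⟨i + 1, hi⟩ : ℕ) : ℝ)) →
        ∃ E₁ E₂ : ℝ,
          |E₁| ≤ C * Real.exp (-Real.log n / (4 * Real.exp z * Real.log N)) ∧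
          |E₂| ≤ C * (n : ℝ) ^ (-(1 : ℝ) / 2) ∧
          (1 / (n : ℝ)) * (((Finset.Icc 1 n).filter fun m => ∀ i, deltaPZ z (p i) m = 1).card : ℝ)
            = (∏ i, (1 / (p i : ℝ)) * ∏ q ∈ primesBetween z (p i), (1 - 1 / (q : ℝ)))
                * (1 + E₁) + E₂ :=
  sieve_density_general z hz u
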